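/- arXiv:cs/0404056 — 6 statements merged into one kernel-verified Lean document; each statement's English description precedes it below -/
import Mathlib

section
/- The 'compact' subtyping rules are equivalent to the original subtyping rules: A <: B is derivable from the original rules if and only if it is derivable from the rules: !^n X <: !^m X, !^n α <: !^m α, !^n ⊤ <: !^m ⊤, !^n(A₁⊗A₂) <: !^m(B₁⊗B₂) from A₁<:B₁ and A₂<:B₂, and !^n(A'⊸B) <: !^m(A⊸B') from A<:A' and B<:B', where each rule carries the side condition (m = 0) ∨ (n ≥ 1). -/
open scoped Classical

/-! ## Types of the quantum lambda calculus -/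

inductive QType : Type
  | const  : ℕ → QType
  | tvar   : ℕ → QType
  | bang   : QType → QType
  | lolli  : QType → QType → QType
  | top    : QType
  | tensor : QType → QType → QType
  deriving DecidableEq

/-- `nbang n A` is `!^n A`. -/
def nbang : ℕ → QType → QType
  | 0, A => A
  | n + 1, A => QType.bang (nbang n A)

/-- The subtyping relation `A <: B`. -/
inductive QSub : QType → QType → Prop
  | const (a : ℕ) : QSub (.const a) (.const a)
  | tvar (X : ℕ) : QSub (.tvar X) (.tvar X)
  | top : QSub .top .top
  | derelict {A B : QType} : QSub A B → QSub (.bang A) B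
  | promote {A B : QType} : QSub (.bang A) B → QSub (.bang A) (.bang B)
  | tensor {A₁ A₂ B₁ B₂ : QType} : QSub A₁ B₁ → QSub A₂ B₂ →
      QSub (.tensor A₁ A₂) (.tensor B₁ B₂)
  | lolli {A A' B B' : QType} : QSub A A' → QSub B B' →
      QSub (.lolli A' B) (.lolli A B')

/-- The compact ("second set") subtyping rules. -/
inductive QSub2 : QType → QType → Prop
  | tvar {n m : ℕ} (X : ℕ) : (m = 0 ∨ 1 ≤ n) →
      QSub2 (nbang n (.tvar X)) (nbang m (.tvar X))
  | const {n m : ℕ} (a : ℕ) : (m = 0 ∨ 1 ≤ n) →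
      QSub2 (nbang n (.const a)) (nbang m (.const a))
  | top {n m : ℕ} : (m = 0 ∨ 1 ≤ n) →
      QSub2 (nbang n .top) (nbang m .top)
  | tensor {n m : ℕ} {A₁ A₂ B₁ B₂ : QType} : (m = 0 ∨ 1 ≤ n) →
      QSub2 A₁ B₁ → QSub2 A₂ B₂ →
      QSub2 (nbang n (.tensor A₁ A₂)) (nbang m (.tensor B₁ B₂))
  | lolli {n m : ℕ} {A A' B B' : QType} : (m = 0 ∨ 1 ≤ n) →
      QSub2 A A' → QSub2 B B' →
      QSub2 (nbang n (.lolli A' B)) (nbang m (.lolli A B'))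

/-! ## Intuitionistic types, skeleton, lifting, decoration -/

inductive IType : Type
  | const : ℕ → IType
  | tvar  : ℕ → IType
  | arrow : IType → IType → IType
  | prod  : IType → IType → IType
  | top   : IType
  deriving DecidableEq

/-- Skeleton `†A`: erase all `!`. -/
def skel : QType → IType
  | .const a => .const a
  | .tvar X => .tvar X
  | .bang A => skel A
  | .lolli A B => .arrow (skel A) (skel B)
  | .top => .top
  | .tensor A B => .prod (skel A) (skel B)

/-- Lifting `♣U`: the `!`-free quantum type with skeleton `U`. -/
def lift : IType → QType
  | .const a => .const a
  | .tvar X => .tvar X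
  | .arrow U V => .lolli (lift U) (lift V)
  | .prod U V => .tensor (lift U) (lift V)
  | .top => .top

/-- Decoration `U ↬ A`. -/
def dec : IType → QType → QType
  | U, .bang A => .bang (dec U A)
  | .arrow U V, .lolli A B => .lolli (dec U A) (dec V B)
  | .prod U V, .tensor A B => .tensor (dec U A) (dec V B)
  | U, _ => lift U

/-! ## Terms -/

inductive Term : Type
  | var : ℕ → Term
  | app : Term → Term → Term
  | lam : ℕ → Term → Term
  | ite : Term → Term → Term → Term
  | bit0 : Term
  | bit1 : Term
  | meas : Term
  | new : Term
  | unitary : ℕ → ℕ → Term   -- arity, index of the gate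
  | star : Term
  | pair : Term → Term → Term
  | letp : ℕ → ℕ → Term → Term → Term
  deriving DecidableEq

/-- Free variables. -/
def FV : Term → Finset ℕ
  | .var x => {x}
  | .app M N => FV M ∪ FV N
  | .lam x M => FV M \ {x}
  | .ite P M N => FV P ∪ FV M ∪ FV N
  | .pair M N => FV M ∪ FV N
  | .letp x y M N => FV M ∪ (FV N \ {x, y})
  | _ => ∅

/-- Values. -/
inductive IsValue : Term → Prop
  | var (x : ℕ) : IsValue (.var x)
  | lam (x : ℕ) (M : Term) : IsValue (.lam x M)
  | bit0 : IsValue .bit0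
  | bit1 : IsValue .bit1
  | meas : IsValue .meas
  | new : IsValue .new
  | unitary (n k : ℕ) : IsValue (.unitary n k)
  | star : IsValue .star
  | pair {V W : Term} : IsValue V → IsValue W → IsValue (.pair V W)

/-- Substitution `M[V/x]` (terms are identified up to α-equivalence, so
substitution does not descend under a binder for `x`). -/
def subst (V : Term) (x : ℕ) : Term → Term
  | .var y => if y = x then V else .var y
  | .app M N => .app (subst V x M) (subst V x N)
  | .lam y M => if y = x then .lam y M else .lam y (subst V x M)
  | .ite P M N => .ite (subst V x P) (subst V x M) (subst V x N)
  | .pair M N => .pair (subst V x M) (subst V x N)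
  | .letp y z M N =>
      .letp y z (subst V x M) (if y = x ∨ z = x then N else subst V x N)
  | M => M

/-! ## Typing contexts -/

def Ctx : Type := ℕ → Option QType

def Ctx.Disj (Γ Δ : Ctx) : Prop := ∀ x, Γ x = none ∨ Δ x = none

def Ctx.union (Γ Δ : Ctx) : Ctx := fun x => (Γ x).orElse (fun _ => Δ x)

/-- A context of the form `!Δ`: every declared type is exponential. -/
def Ctx.IsExp (Δ : Ctx) : Prop := ∀ x A, Δ x = some A → ∃ B, A = QType.bang B

def Ctx.extend (Γ : Ctx) (x : ℕ) (A : QType) : Ctx :=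
  fun y => if y = x then some A else Γ y

/-- Pointwise subtyping of contexts with equal domains. -/
def Ctx.SubCtx (Γ Δ : Ctx) : Prop :=
  (∀ x, (Γ x).isSome ↔ (Δ x).isSome) ∧
  (∀ x A B, Γ x = some A → Δ x = some B → _root_.QSub A B)

/-! ## Base types and types of constants -/

def bitT : QType := .const 0
def qbitT : QType := .const 1

/-- `qbit^n`, the `n`-fold tensor power of `qbit`. -/
def qbits : ℕ → QType
  | 0 => .top
  | 1 => qbitT
  | n + 2 => .tensor qbitT (qbits (n + 1))

/-! ## Typing rules of the quantum lambda calculus -/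

inductive Types : Ctx → Term → QType → Prop
  | ax_var {Γ : Ctx} {x : ℕ} {A B : QType} :
      Γ x = some A → QSub A B → Types Γ (.var x) B
  | ax_bit0 {Γ : Ctx} {B : QType} :
      QSub (.bang bitT) B → Types Γ .bit0 B
  | ax_bit1 {Γ : Ctx} {B : QType} :
      QSub (.bang bitT) B → Types Γ .bit1 B
  | ax_meas {Γ : Ctx} {B : QType} :
      QSub (.bang (.lolli qbitT (.bang bitT))) B → Types Γ .meas B
  | ax_new {Γ : Ctx} {B : QType} :
      QSub (.bang (.lolli bitT qbitT)) B → Types Γ .new B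
  | ax_unitary {Γ : Ctx} {n k : ℕ} {B : QType} :
      QSub (.bang (.lolli (qbits n) (qbits n))) B → Types Γ (.unitary n k) B
  | ite_ {Γ₁ Γ₂ Δ : Ctx} {P M N : Term} {A : QType} :
      Δ.IsExp → Γ₁.Disj Γ₂ → Γ₁.Disj Δ → Γ₂.Disj Δ →
      Types (Γ₁.union Δ) P bitT →
      Types (Γ₂.union Δ) M A → Types (Γ₂.union Δ) N A →
      Types ((Γ₁.union Γ₂).union Δ) (.ite P M N) A
  | app_ {Γ₁ Γ₂ Δ : Ctx} {M N : Term} {A B : QType} :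
      Δ.IsExp → Γ₁.Disj Γ₂ → Γ₁.Disj Δ → Γ₂.Disj Δ →
      Types (Γ₁.union Δ) M (.lolli A B) →
      Types (Γ₂.union Δ) N A →
      Types ((Γ₁.union Γ₂).union Δ) (.app M N) B
  | lam₁ {Δ : Ctx} {x : ℕ} {M : Term} {A B : QType} :
      Δ x = none →
      Types (Δ.extend x A) M B →
      Types Δ (.lam x M) (.lolli A B)
  | lam₂ {Γ Δ : Ctx} {x : ℕ} {M : Term} {A B : QType} {n : ℕ} :
      Δ.IsExp → Γ.Disj Δ → (Γ.union Δ) x = none →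
      (∀ y ∈ FV M, Γ y = none) →
      Types ((Γ.union Δ).extend x A) M B →
      Types (Γ.union Δ) (.lam x M) (nbang (n + 1) (.lolli A B))
  | tens_I {Γ₁ Γ₂ Δ : Ctx} {M₁ M₂ : Term} {A₁ A₂ : QType} {n : ℕ} :
      Δ.IsExp → Γ₁.Disj Γ₂ → Γ₁.Disj Δ → Γ₂.Disj Δ →
      Types (Γ₁.union Δ) M₁ (nbang n A₁) →
      Types (Γ₂.union Δ) M₂ (nbang n A₂) →
      Types ((Γ₁.union Γ₂).union Δ) (.pair M₁ M₂) (nbang n (.tensor A₁ A₂))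
  | top_ {Δ : Ctx} {n : ℕ} : Types Δ .star (nbang n .top)
  | tens_E {Γ₁ Γ₂ Δ : Ctx} {x₁ x₂ : ℕ} {M N : Term} {A A₁ A₂ : QType} {n : ℕ} :
      Δ.IsExp → Γ₁.Disj Γ₂ → Γ₁.Disj Δ → Γ₂.Disj Δ →
      x₁ ≠ x₂ → (Γ₂.union Δ) x₁ = none → (Γ₂.union Δ) x₂ = none →
      Types (Γ₁.union Δ) M (nbang n (.tensor A₁ A₂)) →
      Types (((Γ₂.union Δ).extend x₁ (nbang n A₁)).extend x₂ (nbang n A₂)) N A →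
      Types ((Γ₁.union Γ₂).union Δ) (.letp x₁ x₂ M N) A

/-! ## Simply-typed lambda calculus (skeleton system) -/

def ICtx : Type := ℕ → Option IType

def ICtx.extend (Γ : ICtx) (x : ℕ) (U : IType) : ICtx :=
  fun y => if y = x then some U else Γ y

def skelCtx (Δ : Ctx) : ICtx := fun x => (Δ x).map skel

inductive SimpTypes : ICtx → Term → IType → Prop
  | var {Γ : ICtx} {x : ℕ} {U : IType} :
      Γ x = some U → SimpTypes Γ (.var x) U
  | bit0 {Γ : ICtx} : SimpTypes Γ .bit0 (skel (.bang bitT))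
  | bit1 {Γ : ICtx} : SimpTypes Γ .bit1 (skel (.bang bitT))
  | meas {Γ : ICtx} : SimpTypes Γ .meas (skel (.bang (.lolli qbitT (.bang bitT))))
  | new {Γ : ICtx} : SimpTypes Γ .new (skel (.bang (.lolli bitT qbitT)))
  | unitary {Γ : ICtx} {n k : ℕ} :
      SimpTypes Γ (.unitary n k) (skel (.bang (.lolli (qbits n) (qbits n))))
  | ite_ {Γ : ICtx} {P M N : Term} {U : IType} :
      SimpTypes Γ P (skel bitT) → SimpTypes Γ M U → SimpTypes Γ N U →
      SimpTypes Γ (.ite P M N) U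
  | app_ {Γ : ICtx} {M N : Term} {U V : IType} :
      SimpTypes Γ M (.arrow U V) → SimpTypes Γ N U →
      SimpTypes Γ (.app M N) V
  | lam {Γ : ICtx} {x : ℕ} {M : Term} {U V : IType} :
      SimpTypes (Γ.extend x U) M V → SimpTypes Γ (.lam x M) (.arrow U V)
  | pair {Γ : ICtx} {M N : Term} {U V : IType} :
      SimpTypes Γ M U → SimpTypes Γ N V → SimpTypes Γ (.pair M N) (.prod U V)
  | star {Γ : ICtx} : SimpTypes Γ .star .top
  | letp {Γ : ICtx} {x₁ x₂ : ℕ} {M N : Term} {U₁ U₂ U : IType} :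
      SimpTypes Γ M (.prod U₁ U₂) →
      SimpTypes ((Γ.extend x₁ U₁).extend x₂ U₂) N U →
      SimpTypes Γ (.letp x₁ x₂ M N) U

/-- Pointwise decoration of a context along another context. -/
def decCtx (Δ : ICtx) (Γ : Ctx) : Ctx := fun x =>
  match Δ x, Γ x with
  | some U, some A => some (dec U A)
  | _, _ => none

/-! ## Probabilistic reduction systems -/

structure PRS where
  X : Type
  val : Set X
  R : X → X → Prop
  prob : X → X → ℝ
  val_no_red : ∀ x ∈ val, ∀ y, ¬ R x y
  prob_nonneg : ∀ x y, 0 ≤ prob x y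
  prob_le_one : ∀ x y, prob x y ≤ 1
  prob_zero : ∀ x y, ¬ R x y → prob x y = 0
  fin : ∀ x, {y | R x y}.Finite
  sum_le_one : ∀ x, ∑' y, prob x y ≤ 1

/-- `n`-step reduction probabilities. -/
noncomputable def PRS.probN (S : PRS) : ℕ → S.X → S.X → ℝ
  | 0, x, y => if x = y then 1 else 0
  | n + 1, x, y => ∑' z, S.prob x z * S.probN n z y

/-- The probability of reaching a value state from `x`. -/
noncomputable def PRS.probU (S : PRS) (x : S.X) : ℝ :=
  ∑' (n : ℕ), ∑' (u : S.X), if u ∈ S.val then S.probN n x u else 0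

/-- The probability of divergence from `x` (the limit of the total remaining
mass, which is non-increasing, hence equals the infimum). -/
noncomputable def PRS.probInfty (S : PRS) (x : S.X) : ℝ :=
  ⨅ n : ℕ, ∑' y, S.probN n x y

/-- `n`-step probabilities in the "remaining mass" sense: value states reduce
to themselves with probability `1`. -/
noncomputable def PRS.probN' (S : PRS) : ℕ → S.X → S.X → ℝ
  | 0, x, y => if x = y then 1 else 0
  | n + 1, x, y =>
      if x ∈ S.val then (if x = y then 1 else 0)
      else ∑' z, S.prob x z * S.probN' n z y

/-- Error states. -/
def PRS.IsError (S : PRS) (e : S.X) : Prop :=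
  e ∉ S.val ∧ ∑' y, S.prob e y < 1

/-- Consistency: no error state is reachable. -/
def PRS.Consistent (S : PRS) (x : S.X) : Prop :=
  ∀ e, Relation.ReflTransGen S.R x e → ¬ S.IsError e


lemma qsub_refl : ∀ A : QType, QSub A A := by
  intro A
  induction A with
  | const a => exact .const a
  | tvar X => exact .tvar X
  | bang A ih => exact .promote (.derelict ih)
  | lolli A B ihA ihB => exact .lolli ihA ihB
  | top => exact .top
  | tensor A B ihA ihB => exact .tensor ihA ihB

lemma qsub_derelict_n {A B : QType} (h : QSub A B) : ∀ n, QSub (nbang n A) B := by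
  intro n
  induction n with
  | zero => exact h
  | succ k ih => exact .derelict ih

lemma qsub_nbang {A B : QType} {n m : ℕ} (h : QSub A B) (hc : m = 0 ∨ 1 ≤ n) :
    QSub (nbang n A) (nbang m B) := by
  rcases hc with rfl | hn
  · exact qsub_derelict_n h n
  · obtain ⟨k, rfl⟩ : ∃ k, n = k + 1 := ⟨n - 1, by omega⟩
    induction m with
    | zero => exact qsub_derelict_n h (k+1)
    | succ j ih => exact .promote ih

lemma qsub2_derelict {A B : QType} (h : QSub2 A B) : QSub2 (.bang A) B := by
  cases h with
  | tvar X hc => exact QSub2.tvar (n := _+1) X (by omega)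
  | const a hc => exact QSub2.const (n := _+1) a (by omega)
  | top hc => exact QSub2.top (n := _+1) (by omega)
  | tensor hc h1 h2 => exact QSub2.tensor (n := _+1) (by omega) h1 h2
  | lolli hc h1 h2 => exact QSub2.lolli (n := _+1) (by omega) h1 h2

lemma nbang_bang_ne_zero {n : ℕ} {C A : QType}
    (h : QType.bang A = nbang n C) (hC : ∀ D, C ≠ .bang D) : 1 ≤ n := by
  cases n with
  | zero => exact absurd h.symm (hC A)
  | succ k => omega

lemma qsub2_promote {A B : QType} (h : QSub2 (.bang A) B) :
    QSub2 (.bang A) (.bang B) := by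
  generalize hA : QType.bang A = A' at h
  cases h with
  | tvar X hc =>
      exact QSub2.tvar (m := _+1) X (Or.inr (nbang_bang_ne_zero hA (by intro D h; cases h)))
  | const a hc =>
      exact QSub2.const (m := _+1) a (Or.inr (nbang_bang_ne_zero hA (by intro D h; cases h)))
  | top hc =>
      exact QSub2.top (m := _+1) (Or.inr (nbang_bang_ne_zero hA (by intro D h; cases h)))
  | tensor hc h1 h2 =>
      exact QSub2.tensor (m := _+1) (Or.inr (nbang_bang_ne_zero hA (by intro D h; cases h))) h1 h2
  | lolli hc h1 h2 =>
      exact QSub2.lolli (m := _+1) (Or.inr (nbang_bang_ne_zero hA (by intro D h; cases h))) h1 h2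

-- STATEMENT 2
theorem sub_iff_sub2 (A B : QType) : QSub A B ↔ QSub2 A B := by
  constructor
  · intro h
    induction h with
    | const a => exact QSub2.const (n := 0) (m := 0) a (Or.inl rfl)
    | tvar X => exact QSub2.tvar (n := 0) (m := 0) X (Or.inl rfl)
    | top => exact QSub2.top (n := 0) (m := 0) (Or.inl rfl)
    | derelict _ ih => exact qsub2_derelict ih
    | promote _ ih => exact qsub2_promote ih
    | tensor _ _ ih1 ih2 => exact QSub2.tensor (n := 0) (m := 0) (Or.inl rfl) ih1 ih2
    | lolli _ _ ih1 ih2 => exact QSub2.lolli (n := 0) (m := 0) (Or.inl rfl) ih1 ih2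
  · intro h
    induction h with
    | tvar X hc => exact qsub_nbang (.tvar X) hc
    | const a hc => exact qsub_nbang (.const a) hc
    | top hc => exact qsub_nbang .top hc
    | tensor hc _ _ ih1 ih2 => exact qsub_nbang (.tensor ih1 ih2) hc
    | lolli hc _ _ ih1 ih2 => exact qsub_nbang (.lolli ih1 ih2) hc
end

section
/- In a probabilistic reduction system, for every state x, the probability of reaching a value state from x plus the probability of diverging from x is at most 1: prob_U(x) + prob_∞(x) ≤ 1. -/
open scoped Classical

-- STATEMENT 9
namespace PRSProof

variable (S : PRS)

noncomputable def Rfin (x : S.X) : Finset S.X := (S.fin x).toFinset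

lemma prob_zero_of_not_mem {x y : S.X} (h : y ∉ Rfin S x) : S.prob x y = 0 := by
  apply S.prob_zero
  intro hR
  exact h ((S.fin x).mem_toFinset.2 hR)

noncomputable def reach : ℕ → S.X → Finset S.X
  | 0, x => {x}
  | n + 1, x => (Rfin S x).biUnion (reach n)

lemma probN_nonneg : ∀ (n : ℕ) (x y : S.X), 0 ≤ S.probN n x y := by
  intro n
  induction n with
  | zero => intro x y; simp only [PRS.probN]; positivity
  | succ n ih =>
      intro x y
      simp only [PRS.probN]
      exact tsum_nonneg fun z => mul_nonneg (S.prob_nonneg x z) (ih z y)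

lemma probN_eq_zero : ∀ (n : ℕ) (x y : S.X), y ∉ reach S n x → S.probN n x y = 0 := by
  intro n
  induction n with
  | zero =>
      intro x y hy
      simp only [reach, Finset.mem_singleton] at hy
      simp only [PRS.probN, ite_eq_right_iff]
      intro h; exact absurd h.symm hy
  | succ n ih =>
      intro x y hy
      simp only [PRS.probN]
      have hz : ∀ z, S.prob x z * S.probN n z y = 0 := by
        intro z
        by_cases hz : z ∈ Rfin S x
        · have hm : y ∉ reach S n z := fun hmem =>
            hy (Finset.mem_biUnion.2 ⟨z, hz, hmem⟩)
          rw [ih z y hm, mul_zero]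
        · rw [prob_zero_of_not_mem S hz, zero_mul]
      simp only [hz, tsum_zero]

noncomputable def V (n : ℕ) (x : S.X) : ℝ :=
  ∑' (u : S.X), if u ∈ S.val then S.probN n x u else 0

noncomputable def T (n : ℕ) (x : S.X) : ℝ := ∑' y, S.probN n x y

lemma T_eq_sum (n : ℕ) (x : S.X) : T S n x = ∑ y ∈ reach S n x, S.probN n x y :=
  tsum_eq_sum fun y hy => probN_eq_zero S n x y hy

lemma V_eq_sum (n : ℕ) (x : S.X) :
    V S n x = ∑ u ∈ reach S n x, if u ∈ S.val then S.probN n x u else 0 :=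
  tsum_eq_sum fun u hu => by simp [probN_eq_zero S n x u hu]

lemma T_nonneg (n : ℕ) (x : S.X) : 0 ≤ T S n x :=
  tsum_nonneg fun y => probN_nonneg S n x y

lemma V_nonneg (n : ℕ) (x : S.X) : 0 ≤ V S n x :=
  tsum_nonneg fun u => by
    by_cases h : u ∈ S.val
    · simp only [h, if_true]; exact probN_nonneg S n x u
    · simp [h]

lemma probN_succ_eq_sum (n : ℕ) (x y : S.X) :
    S.probN (n + 1) x y = ∑ z ∈ Rfin S x, S.prob x z * S.probN n z y := by
  simp only [PRS.probN]
  exact tsum_eq_sum fun z hz => by rw [prob_zero_of_not_mem S hz, zero_mul]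

lemma reach_subset {n : ℕ} {x z : S.X} (hz : z ∈ Rfin S x) :
    reach S n z ⊆ reach S (n + 1) x := fun y hy =>
  Finset.mem_biUnion.2 ⟨z, hz, hy⟩

lemma T_succ (n : ℕ) (x : S.X) :
    T S (n + 1) x = ∑ z ∈ Rfin S x, S.prob x z * T S n z := by
  rw [T_eq_sum]
  simp only [probN_succ_eq_sum]
  rw [Finset.sum_comm]
  refine Finset.sum_congr rfl fun z hz => ?_
  rw [← Finset.mul_sum, T_eq_sum]
  congr 1
  exact (Finset.sum_subset (reach_subset S hz)
    fun y _ hy => probN_eq_zero S n z y hy).symm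

lemma V_succ (n : ℕ) (x : S.X) :
    V S (n + 1) x = ∑ z ∈ Rfin S x, S.prob x z * V S n z := by
  rw [V_eq_sum]
  simp only [probN_succ_eq_sum]
  have key : ∀ u : S.X,
      (if u ∈ S.val then ∑ z ∈ Rfin S x, S.prob x z * S.probN n z u else 0)
        = ∑ z ∈ Rfin S x, (if u ∈ S.val then S.prob x z * S.probN n z u else 0) := by
    intro u
    by_cases h : u ∈ S.val <;> simp [h]
  simp only [key]
  rw [Finset.sum_comm]
  refine Finset.sum_congr rfl fun z hz => ?_
  have : ∀ u : S.X, (if u ∈ S.val then S.prob x z * S.probN n z u else 0)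
      = S.prob x z * (if u ∈ S.val then S.probN n z u else 0) := by
    intro u; by_cases h : u ∈ S.val <;> simp [h]
  simp only [this]
  rw [← Finset.mul_sum, V_eq_sum]
  congr 1
  refine (Finset.sum_subset (reach_subset S hz) fun u _ hu => ?_).symm
  simp [probN_eq_zero S n z u hu]

lemma prob_all_zero_of_val {x : S.X} (hx : x ∈ S.val) (z : S.X) : S.prob x z = 0 :=
  S.prob_zero x z (S.val_no_red x hx z)

lemma sum_prob_le_one (x : S.X) : ∑ z ∈ Rfin S x, S.prob x z ≤ 1 := by
  have := S.sum_le_one x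
  rwa [tsum_eq_sum (s := Rfin S x) fun z hz => prob_zero_of_not_mem S hz] at this

lemma key_ineq : ∀ (N : ℕ) (x : S.X),
    (∑ k ∈ Finset.range N, V S k x) + T S N x ≤ 1 := by
  intro N
  induction N with
  | zero =>
      intro x
      simp only [Finset.range_zero, Finset.sum_empty, zero_add]
      have : T S 0 x = 1 := by
        unfold T
        have h1 : (∑' y, S.probN 0 x y) = S.probN 0 x x :=
          tsum_eq_single x fun b hb => by
            simp only [PRS.probN]
            exact if_neg fun h => hb h.symm
        rw [h1]; simp [PRS.probN]
      rw [this]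
  | succ N ih =>
      intro x
      rw [Finset.sum_range_succ']
      by_cases hx : x ∈ S.val
      · have hV0 : V S 0 x = 1 := by
          unfold V
          rw [tsum_eq_single x]
          · simp [hx, PRS.probN]
          · intro b hb
            simp only [PRS.probN]
            have : ¬ (x = b) := fun h => hb h.symm
            simp [this]
        have hVk : ∀ k, V S (k + 1) x = 0 := by
          intro k
          rw [V_succ]
          refine Finset.sum_eq_zero fun z _ => by
            rw [prob_all_zero_of_val S hx, zero_mul]
        have hT : T S (N + 1) x = 0 := by
          rw [T_succ]
          refine Finset.sum_eq_zero fun z _ => by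
            rw [prob_all_zero_of_val S hx, zero_mul]
        simp [hVk, hV0, hT]
      · have hV0 : V S 0 x = 0 := by
          unfold V
          convert tsum_zero with u
          by_cases hu : u ∈ S.val
          · simp only [hu, if_true, PRS.probN, ite_eq_right_iff]
            intro h; subst h; exact absurd hu hx
          · simp [hu]
        rw [hV0, add_zero]
        have hVk : ∀ k ∈ Finset.range N, V S (k + 1) x
            = ∑ z ∈ Rfin S x, S.prob x z * V S k z := fun k _ => V_succ S k x
        rw [Finset.sum_congr rfl hVk, T_succ, Finset.sum_comm, ← Finset.sum_add_distrib]
        calc ∑ z ∈ Rfin S x, ((∑ k ∈ Finset.range N, S.prob x z * V S k z)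
                + S.prob x z * T S N z)
            ≤ ∑ z ∈ Rfin S x, S.prob x z := by
              refine Finset.sum_le_sum fun z _ => ?_
              rw [← Finset.mul_sum, ← mul_add]
              calc S.prob x z * ((∑ k ∈ Finset.range N, V S k z) + T S N z)
                  ≤ S.prob x z * 1 :=
                    mul_le_mul_of_nonneg_left (ih z) (S.prob_nonneg x z)
                _ = S.prob x z := mul_one _
          _ ≤ 1 := sum_prob_le_one S x
end PRSProof

theorem probU_add_probInfty_le_one (S : PRS) (x : S.X) :
    S.probU x + S.probInfty x ≤ 1 := by
  have hle : ∀ N, ∑ k ∈ Finset.range N, PRSProof.V S k x ≤ 1 - S.probInfty x := by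
    intro N
    have h1 := PRSProof.key_ineq S N x
    have h2 : S.probInfty x ≤ PRSProof.T S N x :=
      ciInf_le ⟨0, fun r ⟨n, hn⟩ => hn ▸ PRSProof.T_nonneg S n x⟩ N
    linarith
  have hU : S.probU x ≤ 1 - S.probInfty x := by
    have h3 : S.probU x = ∑' n, PRSProof.V S n x := rfl
    rw [h3]
    exact Real.tsum_le_of_sum_range_le (fun n => PRSProof.V_nonneg S n x) hle
  linarith
end

section
/- In a probabilistic reduction system, if a state x is consistent (no error state is reachable from x via the reachability relation R*), then the error probability of x is zero: prob_err(x) = 0. -/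
open scoped Classical

section Aux

variable (S : PRS)

lemma aux_tsum_exists {α : Type*} {f : α → ℝ} (h : ∑' a, f a ≠ 0) : ∃ a, f a ≠ 0 := by
  by_contra hc
  push_neg at hc
  exact h (by simp [hc])

lemma aux_probN_nonneg : ∀ n (x y : S.X), 0 ≤ S.probN n x y := by
  intro n
  induction n with
  | zero => intro x y; unfold PRS.probN; split <;> norm_num
  | succ n ih =>
    intro x y
    exact tsum_nonneg fun z => mul_nonneg (S.prob_nonneg x z) (ih z y)

lemma aux_prob_support_finite (x : S.X) : (Function.support (S.prob x)).Finite :=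
  (S.fin x).subset fun y hy => by
    by_contra hR
    exact hy (S.prob_zero x y hR)

lemma aux_probN_support_finite : ∀ n (x : S.X), (Function.support (S.probN n x)).Finite := by
  intro n
  induction n with
  | zero =>
    intro x
    refine (Set.finite_singleton x).subset fun y hy => ?_
    simp only [Function.mem_support] at hy
    unfold PRS.probN at hy
    by_contra hxy
    simp only [Set.mem_singleton_iff] at hxy
    rw [if_neg (fun h => hxy h.symm)] at hy
    exact hy rfl
  | succ n ih =>
    intro x
    refine ((aux_prob_support_finite S x).biUnion (fun z _ => ih z)).subset fun y hy => ?_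
    simp only [Function.mem_support] at hy
    have hy' : (∑' z, S.prob x z * S.probN n z y) ≠ 0 := hy
    obtain ⟨z, hz⟩ := aux_tsum_exists hy'
    have h1 : S.prob x z ≠ 0 := fun h => hz (by rw [h, zero_mul])
    have h2 : S.probN n z y ≠ 0 := fun h => hz (by rw [h, mul_zero])
    exact Set.mem_biUnion h1 h2

lemma aux_probN_succ_right : ∀ n (x y : S.X),
    S.probN (n + 1) x y = ∑' z, S.probN n x z * S.prob z y := by
  intro n
  induction n with
  | zero =>
    intro x y
    show (∑' z, S.prob x z * S.probN 0 z y) = _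
    rw [tsum_eq_single y (fun z hz => by
      unfold PRS.probN; rw [if_neg hz, mul_zero])]
    rw [tsum_eq_single x (fun z hz => by
      unfold PRS.probN; rw [if_neg (fun h => hz h.symm), zero_mul])]
    unfold PRS.probN
    simp
  | succ n ih =>
    intro x y
    classical
    set A := (aux_prob_support_finite S x).toFinset with hA
    set B := A.biUnion (fun z => (aux_probN_support_finite S n z).toFinset) with hB
    have hAmem : ∀ z, z ∉ A → S.prob x z = 0 := by
      intro z hz
      by_contra hne
      exact hz (by simp [hA, Function.mem_support, hne])
    have hBmem : ∀ z ∈ A, ∀ w, w ∉ B → S.probN n z w = 0 := by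
      intro z hz w hw
      by_contra hne
      exact hw (Finset.mem_biUnion.2 ⟨z, hz, by simp [Function.mem_support, hne]⟩)
    have hL : S.probN (n + 2) x y = ∑ z ∈ A, S.prob x z * S.probN (n + 1) z y := by
      show (∑' z, S.prob x z * S.probN (n + 1) z y) = _
      exact tsum_eq_sum (fun z hz => by rw [hAmem z hz, zero_mul])
    have hsuppB : ∀ w, w ∉ B → S.probN (n + 1) x w = 0 := by
      intro w hw
      show (∑' z, S.prob x z * S.probN n z w) = 0
      rw [show (fun z => S.prob x z * S.probN n z w) = fun _ => (0 : ℝ) from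
        funext fun z => ?_, tsum_zero]
      by_cases hz : z ∈ A
      · rw [hBmem z hz w hw, mul_zero]
      · rw [hAmem z hz, zero_mul]
    have hR : (∑' w, S.probN (n + 1) x w * S.prob w y)
        = ∑ w ∈ B, S.probN (n + 1) x w * S.prob w y :=
      tsum_eq_sum (fun w hw => by rw [hsuppB w hw, zero_mul])
    rw [hL, hR]
    have hmid : ∀ z ∈ A, S.probN (n + 1) z y = ∑ w ∈ B, S.probN n z w * S.prob w y := by
      intro z hz
      rw [ih z y]
      exact tsum_eq_sum (fun w hw => by rw [hBmem z hz w hw, zero_mul])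
    have hinner : ∀ w ∈ B, S.probN (n + 1) x w = ∑ z ∈ A, S.prob x z * S.probN n z w := by
      intro w _
      show (∑' z, S.prob x z * S.probN n z w) = _
      exact tsum_eq_sum (fun z hz => by rw [hAmem z hz, zero_mul])
    calc ∑ z ∈ A, S.prob x z * S.probN (n + 1) z y
        = ∑ z ∈ A, ∑ w ∈ B, S.prob x z * (S.probN n z w * S.prob w y) := by
          refine Finset.sum_congr rfl fun z hz => ?_
          rw [hmid z hz, Finset.mul_sum]
      _ = ∑ w ∈ B, ∑ z ∈ A, S.prob x z * (S.probN n z w * S.prob w y) := Finset.sum_comm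
      _ = ∑ w ∈ B, S.probN (n + 1) x w * S.prob w y := by
          refine Finset.sum_congr rfl fun w hw => ?_
          rw [hinner w hw, Finset.sum_mul]
          exact Finset.sum_congr rfl fun z _ => by ring

lemma aux_probN_reachable : ∀ n (x z : S.X), S.probN n x z ≠ 0 →
    Relation.ReflTransGen S.R x z := by
  intro n
  induction n with
  | zero =>
    intro x z hz
    unfold PRS.probN at hz
    by_cases hxz : x = z
    · exact hxz ▸ Relation.ReflTransGen.refl
    · rw [if_neg hxz] at hz; exact absurd rfl hz
  | succ n ih =>
    intro x z hz
    obtain ⟨w, hw⟩ := aux_tsum_exists hz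
    have h1 : S.prob x w ≠ 0 := fun h => hw (by rw [h, zero_mul])
    have h2 : S.probN n w z ≠ 0 := fun h => hw (by rw [h, mul_zero])
    have hR : S.R x w := by
      by_contra hR
      exact h1 (S.prob_zero x w hR)
    exact Relation.ReflTransGen.head hR (ih w z h2)

lemma aux_rowsum (x : S.X) (h : S.Consistent x) (z : S.X)
    (hz : Relation.ReflTransGen S.R x z) :
    (∑' y, S.prob z y) = if z ∈ S.val then 0 else 1 := by
  by_cases hv : z ∈ S.val
  · rw [if_pos hv]
    rw [show (fun y => S.prob z y) = fun _ => (0 : ℝ) from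
      funext fun y => S.prob_zero z y (S.val_no_red z hv y), tsum_zero]
  · rw [if_neg hv]
    have hnotErr := h z hz
    have h1 : ¬ (∑' y, S.prob z y) < 1 := fun hlt => hnotErr ⟨hv, hlt⟩
    exact le_antisymm (S.sum_le_one z) (not_lt.1 h1)

lemma aux_step (x : S.X) (h : S.Consistent x) (n : ℕ) :
    (∑' y, S.probN (n + 1) x y)
      = (∑' y, S.probN n x y) - ∑' u, (if u ∈ S.val then S.probN n x u else 0) := by
  classical
  set C := (aux_probN_support_finite S n x).toFinset with hC
  set B := C.biUnion (fun z => (aux_prob_support_finite S z).toFinset) with hB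
  have hCmem : ∀ z, z ∉ C → S.probN n x z = 0 := by
    intro z hz
    by_contra hne
    exact hz (by simp [hC, Function.mem_support, hne])
  have hBmem : ∀ z ∈ C, ∀ y, y ∉ B → S.prob z y = 0 := by
    intro z hz y hy
    by_contra hne
    exact hy (Finset.mem_biUnion.2 ⟨z, hz, by simp [Function.mem_support, hne]⟩)
  have hsuppB : ∀ y, y ∉ B → S.probN (n + 1) x y = 0 := by
    intro y hy
    rw [aux_probN_succ_right]
    rw [show (fun z => S.probN n x z * S.prob z y) = fun _ => (0 : ℝ) from
      funext fun z => ?_, tsum_zero]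
    by_cases hz : z ∈ C
    · rw [hBmem z hz y hy, mul_zero]
    · rw [hCmem z hz, zero_mul]
  have hL : (∑' y, S.probN (n + 1) x y) = ∑ y ∈ B, S.probN (n + 1) x y :=
    tsum_eq_sum (fun y hy => hsuppB y hy)
  have hT : (∑' y, S.probN n x y) = ∑ z ∈ C, S.probN n x z :=
    tsum_eq_sum (fun z hz => hCmem z hz)
  have hV : (∑' u, (if u ∈ S.val then S.probN n x u else 0))
      = ∑ z ∈ C, (if z ∈ S.val then S.probN n x z else 0) :=
    tsum_eq_sum (fun z hz => by rw [hCmem z hz]; simp)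
  rw [hL, hT, hV]
  have h1 : ∀ y ∈ B, S.probN (n + 1) x y = ∑ z ∈ C, S.probN n x z * S.prob z y := by
    intro y _
    rw [aux_probN_succ_right]
    exact tsum_eq_sum (fun z hz => by rw [hCmem z hz, zero_mul])
  rw [Finset.sum_congr rfl h1, Finset.sum_comm]
  have h2 : ∀ z ∈ C, (∑ y ∈ B, S.probN n x z * S.prob z y)
      = S.probN n x z - (if z ∈ S.val then S.probN n x z else 0) := by
    intro z hz
    have hzC : S.probN n x z ≠ 0 := by
      have := hz
      rw [hC, Set.Finite.mem_toFinset, Function.mem_support] at this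
      exact this
    have hreach := aux_probN_reachable S n x z hzC
    have hrow : (∑ y ∈ B, S.prob z y) = if z ∈ S.val then 0 else 1 := by
      rw [← aux_rowsum S x h z hreach]
      exact (tsum_eq_sum (fun y hy => hBmem z hz y hy)).symm
    rw [← Finset.mul_sum, hrow]
    by_cases hv : z ∈ S.val <;> simp [hv]
  rw [Finset.sum_congr rfl h2, Finset.sum_sub_distrib]

end Aux

-- STATEMENT 11
theorem consistent_probErr_zero (S : PRS) (x : S.X) (h : S.Consistent x) :
    1 - S.probU x - S.probInfty x = 0 := by
  classical
  set T : ℕ → ℝ := fun n => ∑' y, S.probN n x y with hT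
  set V : ℕ → ℝ := fun n => ∑' u, (if u ∈ S.val then S.probN n x u else 0) with hV
  have hT0 : T 0 = 1 := by
    rw [hT]
    show (∑' y, S.probN 0 x y) = 1
    rw [tsum_eq_single x (fun y hy => by
      unfold PRS.probN; rw [if_neg (fun h => hy h.symm)])]
    unfold PRS.probN
    simp
  have hTnonneg : ∀ n, 0 ≤ T n := fun n =>
    tsum_nonneg fun y => aux_probN_nonneg S n x y
  have hVnonneg : ∀ n, 0 ≤ V n := fun n =>
    tsum_nonneg fun u => by
      by_cases hv : u ∈ S.val <;> simp [hv, aux_probN_nonneg S n x u]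
  have hstep : ∀ n, T (n + 1) = T n - V n := fun n => aux_step S x h n
  have hpartial : ∀ n, (∑ k ∈ Finset.range n, V k) = 1 - T n := by
    intro n
    induction n with
    | zero => simp [hT0]
    | succ n ih =>
      rw [Finset.sum_range_succ, ih, hstep n]
      ring
  have hTanti : Antitone T := antitone_nat_of_succ_le fun n => by
    rw [hstep n]
    linarith [hVnonneg n]
  have hbdd : BddBelow (Set.range T) := ⟨0, fun t ⟨n, hn⟩ => hn ▸ hTnonneg n⟩
  have hTlim : Filter.Tendsto T Filter.atTop (nhds (⨅ n, T n)) :=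
    tendsto_atTop_ciInf hTanti hbdd
  have hVsummable : Summable V := by
    refine summable_of_sum_range_le (c := 1) hVnonneg fun n => ?_
    rw [hpartial n]
    linarith [hTnonneg n]
  have hVsum : Filter.Tendsto (fun n => ∑ k ∈ Finset.range n, V k) Filter.atTop
      (nhds (∑' n, V n)) := hVsummable.hasSum.tendsto_sum_nat
  have hVsum' : Filter.Tendsto (fun n => ∑ k ∈ Finset.range n, V k) Filter.atTop
      (nhds (1 - ⨅ n, T n)) := by
    have : (fun n => ∑ k ∈ Finset.range n, V k) = fun n => 1 - T n :=
      funext fun n => hpartial n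
    rw [this]
    exact (tendsto_const_nhds).sub hTlim
  have hkey : (∑' n, V n) = 1 - ⨅ n, T n := tendsto_nhds_unique hVsum hVsum'
  have hU : S.probU x = ∑' n, V n := rfl
  have hI : S.probInfty x = ⨅ n, T n := rfl
  rw [hU, hI, hkey]
  ring
end

section
/- If V is a value and Δ ⊳ V : !A is derivable, then for every free variable x of V, the type Δ(x) is exponential, i.e., Δ(x) = !U for some type U. -/
open scoped Classical

/-- If `A <: !B` then `A` is itself exponential. -/
lemma QSub.bang_of_sub_bang {A B : QType} (h : QSub A (.bang B)) :
    ∃ A', A = .bang A' := by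
  cases h with
  | derelict _ => exact ⟨_, rfl⟩
  | promote _ => exact ⟨_, rfl⟩

lemma Ctx.union_some_left {Γ Δ : Ctx} {y : ℕ} {B : QType} (h : Γ y = some B) :
    Ctx.union Γ Δ y = some B := by
  simp [Ctx.union, h]

lemma Ctx.union_some_right {Γ Δ : Ctx} {y : ℕ} (h : Γ y = none) :
    Ctx.union Γ Δ y = Δ y := by
  simp [Ctx.union, h]

lemma Ctx.union_isSome {Γ Δ : Ctx} {y : ℕ} :
    (Ctx.union Γ Δ y).isSome ↔ (Γ y).isSome ∨ (Δ y).isSome := by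
  cases h : Γ y with
  | none => simp [Ctx.union, h]
  | some B => simp [Ctx.union, h]

/-- Every free variable of a well-typed term is declared in the context. -/
lemma Types.fv_decl {Γ : Ctx} {M : Term} {A : QType} (h : Types Γ M A) :
    ∀ y ∈ FV M, (Γ y).isSome := by
  induction h with
  | ax_var hx _ =>
      intro y hy; simp [FV] at hy; subst hy; simp [hx]
  | ax_bit0 _ => intro y hy; simp [FV] at hy
  | ax_bit1 _ => intro y hy; simp [FV] at hy
  | ax_meas _ => intro y hy; simp [FV] at hy
  | ax_new _ => intro y hy; simp [FV] at hy
  | ax_unitary _ => intro y hy; simp [FV] at hy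
  | ite_ _ _ _ _ _ _ _ ihP ihM ihN =>
      intro y hy
      simp only [FV, Finset.mem_union] at hy
      rw [Ctx.union_isSome, Ctx.union_isSome]
      rcases hy with (hy | hy) | hy
      · have := ihP y hy; rw [Ctx.union_isSome] at this; tauto
      · have := ihM y hy; rw [Ctx.union_isSome] at this; tauto
      · have := ihN y hy; rw [Ctx.union_isSome] at this; tauto
  | app_ _ _ _ _ _ _ ihM ihN =>
      intro y hy
      simp only [FV, Finset.mem_union] at hy
      rw [Ctx.union_isSome, Ctx.union_isSome]
      rcases hy with hy | hy
      · have := ihM y hy; rw [Ctx.union_isSome] at this; tauto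
      · have := ihN y hy; rw [Ctx.union_isSome] at this; tauto
  | lam₁ _ _ ih =>
      intro y hy
      simp only [FV, Finset.mem_sdiff, Finset.mem_singleton] at hy
      have := ih y hy.1
      simpa [Ctx.extend, hy.2] using this
  | lam₂ _ _ _ _ _ ih =>
      intro y hy
      simp only [FV, Finset.mem_sdiff, Finset.mem_singleton] at hy
      have := ih y hy.1
      simpa [Ctx.extend, hy.2] using this
  | tens_I _ _ _ _ _ _ ih1 ih2 =>
      intro y hy
      simp only [FV, Finset.mem_union] at hy
      rw [Ctx.union_isSome, Ctx.union_isSome]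
      rcases hy with hy | hy
      · have := ih1 y hy; rw [Ctx.union_isSome] at this; tauto
      · have := ih2 y hy; rw [Ctx.union_isSome] at this; tauto
  | top_ => intro y hy; simp [FV] at hy
  | tens_E _ _ _ _ hne _ _ _ _ ihM ihN =>
      intro y hy
      simp only [FV, Finset.mem_union, Finset.mem_sdiff, Finset.mem_insert,
        Finset.mem_singleton] at hy
      rw [Ctx.union_isSome, Ctx.union_isSome]
      rcases hy with hy | ⟨hy, hy2⟩
      · have := ihM y hy; rw [Ctx.union_isSome] at this; tauto
      · push_neg at hy2
        have := ihN y hy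
        simp only [Ctx.extend, if_neg hy2.2, if_neg hy2.1] at this
        rw [Ctx.union_isSome] at this; tauto

lemma Ctx.lift_left {Γ₁ Γ₂ Δ : Ctx} {y : ℕ} {B : QType}
    (hd2 : Γ₂.Disj Δ) (h : Ctx.union Γ₁ Δ y = some B) :
    Ctx.union (Ctx.union Γ₁ Γ₂) Δ y = some B := by
  cases h1 : Γ₁ y with
  | some C =>
      rw [Ctx.union_some_left h1] at h
      obtain rfl : C = B := Option.some.inj h
      exact Ctx.union_some_left (Ctx.union_some_left h1)
  | none =>
      rw [Ctx.union_some_right h1] at h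
      have h2 : Γ₂ y = none := (hd2 y).resolve_right (by simp [h])
      rw [Ctx.union_some_right (show Ctx.union Γ₁ Γ₂ y = none by
        simp [Ctx.union, h1, h2])]
      exact h

lemma Ctx.lift_right {Γ₁ Γ₂ Δ : Ctx} {y : ℕ} {B : QType}
    (hd12 : Γ₁.Disj Γ₂) (hd1 : Γ₁.Disj Δ) (h : Ctx.union Γ₂ Δ y = some B) :
    Ctx.union (Ctx.union Γ₁ Γ₂) Δ y = some B := by
  cases h2 : Γ₂ y with
  | some C =>
      rw [Ctx.union_some_left h2] at h
      have h1 : Γ₁ y = none := (hd12 y).resolve_right (by simp [h2])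
      exact Ctx.union_some_left (by rw [Ctx.union_some_right h1, h2, h])
  | none =>
      rw [Ctx.union_some_right h2] at h
      have h1 : Γ₁ y = none := (hd1 y).resolve_right (by simp [h])
      rw [Ctx.union_some_right (show Ctx.union Γ₁ Γ₂ y = none by
        simp [Ctx.union, h1, h2])]
      exact h

lemma value_bang_aux {Γ : Ctx} {V : Term} {T : QType} (h : Types Γ V T) :
    ∀ A, T = QType.bang A → IsValue V →
      ∀ x ∈ FV V, ∃ U, Γ x = some (QType.bang U) := by
  induction h with
  | ax_var hx hs =>
      intro A hA hV y hy
      simp [FV] at hy; subst hy; subst hA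
      obtain ⟨U, hU⟩ := hs.bang_of_sub_bang
      exact ⟨U, hU ▸ hx⟩
  | ax_bit0 _ => intro A hA hV y hy; simp [FV] at hy
  | ax_bit1 _ => intro A hA hV y hy; simp [FV] at hy
  | ax_meas _ => intro A hA hV y hy; simp [FV] at hy
  | ax_new _ => intro A hA hV y hy; simp [FV] at hy
  | ax_unitary _ => intro A hA hV y hy; simp [FV] at hy
  | ite_ _ _ _ _ _ _ _ => intro A hA hV; cases hV
  | app_ _ _ _ _ _ _ => intro A hA hV; cases hV
  | lam₁ _ _ => intro A hA; exact absurd hA (by simp)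
  | lam₂ hExp hd hnone hΓ hbody =>
      intro A' hA' hV y hy
      simp only [FV, Finset.mem_sdiff, Finset.mem_singleton] at hy
      have hsome := hbody.fv_decl y hy.1
      simp only [Ctx.extend, if_neg hy.2] at hsome
      have hΓy : _ = none := hΓ y hy.1
      rw [Ctx.union_some_right hΓy] at hsome ⊢
      obtain ⟨C, hC⟩ := Option.isSome_iff_exists.mp hsome
      obtain ⟨U, hU⟩ := hExp y C hC
      exact ⟨U, hU ▸ hC⟩
  | tens_I hExp hd12 hd1 hd2 h1 h2 ih1 ih2 =>
      intro A hA hV y hy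
      cases hV with
      | pair hv1 hv2 =>
        rename_i n
        cases n with
        | zero => exact absurd hA (by cases ‹QType› <;> simp [nbang])
        | succ n =>
          simp only [FV, Finset.mem_union] at hy
          rcases hy with hy | hy
          · obtain ⟨U, hU⟩ := ih1 _ rfl hv1 y hy
            exact ⟨U, Ctx.lift_left hd2 hU⟩
          · obtain ⟨U, hU⟩ := ih2 _ rfl hv2 y hy
            exact ⟨U, Ctx.lift_right hd12 hd1 hU⟩
  | top_ => intro A hA hV y hy; simp [FV] at hy
  | tens_E _ _ _ _ _ _ _ _ _ => intro A hA hV; cases hV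

-- STATEMENT 15
theorem value_bang_free_vars_exponential {Δ : Ctx} {V : Term} {A : QType}
    (hV : IsValue V) (h : Types Δ V (QType.bang A)) :
    ∀ x ∈ FV V, ∃ U, Δ x = some (QType.bang U) :=
  value_bang_aux h A rfl hV
end

section
/- The skeleton of any valid quantum typing derivation is a valid simply-typed derivation: if Δ ⊳ M : A is derivable in the quantum lambda calculus, then †Δ ▶ M : †A is derivable in the simply-typed lambda calculus (with products, unit, booleans, and the constants meas, new, U at the skeleton of their types). -/
open scoped Classical

lemma skel_of_qsub {A B : QType} (h : QSub A B) : skel A = skel B := by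
  induction h <;> simp_all [skel]

lemma skel_nbang (n : ℕ) (A : QType) : skel (nbang n A) = skel A := by
  induction n <;> simp_all [nbang, skel]

/-- Inclusion of intuitionistic contexts. -/
def ISub (Γ Γ' : ICtx) : Prop := ∀ x U, Γ x = some U → Γ' x = some U

lemma ISub.extend {Γ Γ' : ICtx} (h : ISub Γ Γ') (x : ℕ) (U : IType) :
    ISub (Γ.extend x U) (Γ'.extend x U) := by
  intro y V hy
  unfold ICtx.extend at *
  by_cases hxy : y = x <;> simp_all
  exact h y V hy

lemma SimpTypes.weaken {Γ Γ' : ICtx} {M : Term} {U : IType}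
    (h : SimpTypes Γ M U) (hs : ISub Γ Γ') : SimpTypes Γ' M U := by
  induction h generalizing Γ' with
  | var hx => exact .var (hs _ _ hx)
  | bit0 => exact .bit0
  | bit1 => exact .bit1
  | meas => exact .meas
  | new => exact .new
  | unitary => exact .unitary
  | ite_ _ _ _ ih1 ih2 ih3 => exact .ite_ (ih1 hs) (ih2 hs) (ih3 hs)
  | app_ _ _ ih1 ih2 => exact .app_ (ih1 hs) (ih2 hs)
  | lam _ ih => exact .lam (ih (hs.extend _ _))
  | pair _ _ ih1 ih2 => exact .pair (ih1 hs) (ih2 hs)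
  | star => exact .star
  | letp _ _ ih1 ih2 => exact .letp (ih1 hs) (ih2 ((hs.extend _ _).extend _ _))

lemma skelCtx_extend (Δ : Ctx) (x : ℕ) (A : QType) :
    skelCtx (Δ.extend x A) = (skelCtx Δ).extend x (skel A) := by
  funext y
  unfold skelCtx Ctx.extend ICtx.extend
  by_cases h : y = x <;> simp [h]

lemma isub_left {Γ₁ Γ₂ Δ : Ctx} (h12 : Γ₁.Disj Γ₂) (h2d : Γ₂.Disj Δ) :
    ISub (skelCtx (Γ₁.union Δ)) (skelCtx ((Γ₁.union Γ₂).union Δ)) := by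
  intro x U hx
  unfold skelCtx Ctx.union at *
  cases h1 : Γ₁ x with
  | some A => simp_all [Option.orElse]
  | none =>
    rcases h2d x with h2 | hd
    · simp_all [Option.orElse]
    · simp_all [Option.orElse]

lemma isub_right {Γ₁ Γ₂ Δ : Ctx} (h12 : Γ₁.Disj Γ₂) (h1d : Γ₁.Disj Δ) :
    ISub (skelCtx (Γ₂.union Δ)) (skelCtx ((Γ₁.union Γ₂).union Δ)) := by
  intro x U hx
  unfold skelCtx Ctx.union at *
  cases h2 : Γ₂ x with
  | some A =>
    rcases h12 x with h1 | h1
    · simp_all [Option.orElse]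
    · simp_all
  | none =>
    cases hd : Δ x with
    | none => simp_all [Option.orElse]
    | some A =>
      rcases h1d x with h1 | h1
      · simp_all [Option.orElse]
      · simp_all

-- STATEMENT 18
theorem skeleton_derivation {Δ : Ctx} {M : Term} {A : QType}
    (h : Types Δ M A) : SimpTypes (skelCtx Δ) M (skel A) := by
  induction h with
  | ax_var hx hs =>
    refine .var ?_
    rw [← skel_of_qsub hs]
    simp [skelCtx, hx]
  | ax_bit0 hs => rw [← skel_of_qsub hs]; exact .bit0
  | ax_bit1 hs => rw [← skel_of_qsub hs]; exact .bit1
  | ax_meas hs => rw [← skel_of_qsub hs]; exact .meas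
  | ax_new hs => rw [← skel_of_qsub hs]; exact .new
  | ax_unitary hs => rw [← skel_of_qsub hs]; exact .unitary
  | ite_ hexp h12 h1d h2d _ _ _ ih1 ih2 ih3 =>
    exact .ite_ (ih1.weaken (isub_left h12 h2d))
      (ih2.weaken (isub_right h12 h1d)) (ih3.weaken (isub_right h12 h1d))
  | app_ hexp h12 h1d h2d _ _ ih1 ih2 =>
    exact .app_ (ih1.weaken (isub_left h12 h2d)) (ih2.weaken (isub_right h12 h1d))
  | lam₁ _ _ ih =>
    refine .lam ?_
    rwa [skelCtx_extend] at ih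
  | lam₂ _ _ _ _ _ ih =>
    rw [skel_nbang]
    refine .lam ?_
    rwa [skelCtx_extend] at ih
  | tens_I hexp h12 h1d h2d _ _ ih1 ih2 =>
    rw [skel_nbang]
    rw [skel_nbang] at ih1 ih2
    exact .pair (ih1.weaken (isub_left h12 h2d)) (ih2.weaken (isub_right h12 h1d))
  | top_ => rw [skel_nbang]; exact .star
  | tens_E hexp h12 h1d h2d hne hx1 hx2 _ _ ih1 ih2 =>
    rw [skel_nbang] at ih1
    refine .letp (ih1.weaken (isub_left h12 h2d)) ?_
    rw [skelCtx_extend, skelCtx_extend, skel_nbang, skel_nbang] at ih2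
    exact ih2.weaken (((isub_right h12 h1d).extend _ _).extend _ _)
end

section
/- Decoration lemma: if Γ ⊳ M : A is derivable in the quantum lambda calculus, and Δ ▶ M : U is any valid simply-typed derivation with |Δ| = |Γ|, then (Δ ↬ Γ) ⊳ M : (U ↬ A) is derivable in the quantum lambda calculus, where ↬ denotes decoration applied pointwise to contexts. -/
open scoped Classical

/-! ## Auxiliary lemmas for the decoration lemma -/

lemma dec_bang (U : IType) (A : QType) : dec U (.bang A) = .bang (dec U A) := by
  cases U <;> rfl

lemma dec_lolli_arrow (U V : IType) (A B : QType) :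
    dec (.arrow U V) (.lolli A B) = .lolli (dec U A) (dec V B) := rfl

lemma dec_nbang (n : ℕ) (U : IType) (A : QType) :
    dec U (nbang n A) = nbang n (dec U A) := by
  induction n with
  | zero => rfl
  | succ n ih => simp [nbang, dec_bang, ih]

lemma dec_skel (A : QType) : dec (skel A) A = A := by
  induction A with
  | const a => rfl
  | tvar X => rfl
  | bang A ih => simp [skel, dec_bang, ih]
  | lolli A B ihA ihB => simp [skel, dec, ihA, ihB]
  | top => rfl
  | tensor A B ihA ihB => simp [skel, dec, ihA, ihB]

lemma lift_sub_refl (U : IType) : QSub (lift U) (lift U) := by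
  induction U with
  | const a => exact QSub.const a
  | tvar X => exact QSub.tvar X
  | arrow U V ihU ihV => exact QSub.lolli ihU ihV
  | prod U V ihU ihV => exact QSub.tensor ihU ihV
  | top => exact QSub.top

lemma dec_sub {A B : QType} (h : QSub A B) (U : IType) :
    QSub (dec U A) (dec U B) := by
  induction h generalizing U with
  | const a => cases U <;> exact lift_sub_refl _
  | tvar X => cases U <;> exact lift_sub_refl _
  | top => cases U <;> exact lift_sub_refl _
  | derelict h ih => rw [dec_bang]; exact QSub.derelict (ih U)
  | promote h ih =>
      rw [dec_bang, dec_bang]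
      exact QSub.promote (by rw [← dec_bang]; exact ih U)
  | tensor h₁ h₂ ih₁ ih₂ =>
      cases U with
      | prod U V => exact QSub.tensor (ih₁ U) (ih₂ V)
      | _ => exact lift_sub_refl _
  | lolli h₁ h₂ ih₁ ih₂ =>
      cases U with
      | arrow U V => exact QSub.lolli (ih₁ U) (ih₂ V)
      | _ => exact lift_sub_refl _

lemma dec_sub_skel {A B : QType} (h : QSub A B) :
    QSub A (dec (skel A) B) := by
  have := dec_sub h (skel A)
  rwa [dec_skel] at this

lemma decCtx_none {Δ : ICtx} {Γ : Ctx} {x : ℕ} (h : Γ x = none) :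
    decCtx Δ Γ x = none := by
  unfold decCtx; rw [h]; cases Δ x <;> rfl

lemma decCtx_union (Δ : ICtx) (Γ Γ' : Ctx) :
    decCtx Δ (Γ.union Γ') = (decCtx Δ Γ).union (decCtx Δ Γ') := by
  funext x
  simp only [decCtx, Ctx.union]
  cases hΔ : Δ x <;> cases hΓ : Γ x <;> cases hΓ' : Γ' x <;>
    simp [hΔ, hΓ, hΓ', Option.orElse]

lemma decCtx_extend (Δ : ICtx) (Γ : Ctx) (x : ℕ) (U : IType) (A : QType) :
    decCtx (Δ.extend x U) (Γ.extend x A) = (decCtx Δ Γ).extend x (dec U A) := by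
  funext y
  unfold decCtx ICtx.extend Ctx.extend
  by_cases h : y = x <;> simp [h]

lemma decCtx_disj {Δ : ICtx} {Γ Γ' : Ctx} (h : Γ.Disj Γ') :
    (decCtx Δ Γ).Disj (decCtx Δ Γ') := by
  intro x
  rcases h x with h' | h'
  · exact Or.inl (decCtx_none h')
  · exact Or.inr (decCtx_none h')

lemma decCtx_isExp {Δ : ICtx} {Γ : Ctx} (h : Γ.IsExp) :
    (decCtx Δ Γ).IsExp := by
  intro x A hA
  unfold decCtx at hA
  cases hΔ : Δ x with
  | none => rw [hΔ] at hA; cases Γ x <;> simp_all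
  | some U =>
      rw [hΔ] at hA
      cases hΓ : Γ x with
      | none => rw [hΓ] at hA; simp_all
      | some B =>
          rw [hΓ] at hA
          simp only [Option.some.injEq] at hA
          obtain ⟨C, rfl⟩ := h x B hΓ
          exact ⟨dec U C, by rw [← hA, dec_bang]⟩

lemma isSome_union {Γ Γ' : Ctx} {x : ℕ} :
    ((Γ.union Γ') x).isSome ↔ (Γ x).isSome ∨ (Γ' x).isSome := by
  unfold Ctx.union
  cases Γ x <;> cases Γ' x <;> simp


lemma hdom_left {Γ₁ Γ₂ Δq : Ctx} {Δ : ICtx}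
    (hdom : ∀ x, (((Γ₁.union Γ₂).union Δq) x).isSome → (Δ x).isSome) :
    ∀ x, ((Γ₁.union Δq) x).isSome → (Δ x).isSome := by
  intro x hx
  apply hdom
  rw [isSome_union] at hx ⊢
  rw [isSome_union]
  tauto

lemma hdom_right {Γ₁ Γ₂ Δq : Ctx} {Δ : ICtx}
    (hdom : ∀ x, (((Γ₁.union Γ₂).union Δq) x).isSome → (Δ x).isSome) :
    ∀ x, ((Γ₂.union Δq) x).isSome → (Δ x).isSome := by
  intro x hx
  apply hdom
  rw [isSome_union] at hx ⊢
  rw [isSome_union]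
  tauto

lemma hdom_extend {Γ : Ctx} {Δ : ICtx} {x : ℕ} {A : QType} {U : IType}
    (hdom : ∀ y, (Γ y).isSome → (Δ y).isSome) :
    ∀ y, ((Γ.extend x A) y).isSome → ((Δ.extend x U) y).isSome := by
  intro y hy
  unfold Ctx.extend at hy
  unfold ICtx.extend
  by_cases h : y = x <;> simp [h] at hy ⊢
  exact hdom y hy

lemma decoration_aux {Γ : Ctx} {M : Term} {A : QType} (hq : Types Γ M A) :
    ∀ {Δ : ICtx} {U : IType}, SimpTypes Δ M U →
      (∀ x, (Γ x).isSome → (Δ x).isSome) →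
      Types (decCtx Δ Γ) M (dec U A) := by
  induction hq with
  | ax_var hx hsub =>
      intro Δ U hi hdom
      cases hi with
      | var hU =>
          refine Types.ax_var (A := dec U _) ?_ (dec_sub hsub U)
          unfold decCtx; rw [hU, hx]
  | ax_bit0 hsub =>
      intro Δ U hi _; cases hi; exact Types.ax_bit0 (dec_sub_skel hsub)
  | ax_bit1 hsub =>
      intro Δ U hi _; cases hi; exact Types.ax_bit1 (dec_sub_skel hsub)
  | ax_meas hsub =>
      intro Δ U hi _; cases hi; exact Types.ax_meas (dec_sub_skel hsub)
  | ax_new hsub =>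
      intro Δ U hi _; cases hi; exact Types.ax_new (dec_sub_skel hsub)
  | ax_unitary hsub =>
      intro Δ U hi _; cases hi; exact Types.ax_unitary (dec_sub_skel hsub)
  | ite_ hexp h12 h1d h2d hP hM hN ihP ihM ihN =>
      intro Δ U hi hdom
      cases hi with
      | ite_ hiP hiM hiN =>
          rw [decCtx_union, decCtx_union]
          have hd1 := hdom_left hdom
          have hd2 := hdom_right hdom
          have hP' := ihP hiP hd1
          have hM' := ihM hiM hd2
          have hN' := ihN hiN hd2
          rw [decCtx_union] at hP' hM' hN'
          have hbit : dec (skel bitT) bitT = bitT := dec_skel bitT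
          rw [hbit] at hP'
          exact Types.ite_ (decCtx_isExp hexp) (decCtx_disj h12)
            (decCtx_disj h1d) (decCtx_disj h2d) hP' hM' hN'
  | app_ hexp h12 h1d h2d hM hN ihM ihN =>
      intro Δ U hi hdom
      cases hi with
      | app_ hiM hiN =>
          rw [decCtx_union, decCtx_union]
          have hd1 := hdom_left hdom
          have hd2 := hdom_right hdom
          have hM' := ihM hiM hd1
          have hN' := ihN hiN hd2
          rw [decCtx_union] at hM' hN'
          rw [dec_lolli_arrow] at hM'
          exact Types.app_ (decCtx_isExp hexp) (decCtx_disj h12)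
            (decCtx_disj h1d) (decCtx_disj h2d) hM' hN'
  | lam₁ hx hM ihM =>
      intro Δ U hi hdom
      cases hi with
      | lam hiM =>
          have hM' := ihM hiM (hdom_extend hdom)
          rw [decCtx_extend] at hM'
          rw [dec_lolli_arrow]
          exact Types.lam₁ (decCtx_none hx) hM'
  | lam₂ hexp hgd hx hfv hM ihM =>
      intro Δ U hi hdom
      cases hi with
      | lam hiM =>
          rw [dec_nbang, dec_lolli_arrow, decCtx_union]
          have hM' := ihM hiM (hdom_extend hdom)
          rw [decCtx_extend, decCtx_union] at hM'
          refine Types.lam₂ (decCtx_isExp hexp) (decCtx_disj hgd) ?_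
            (fun y hy => decCtx_none (hfv y hy)) hM'
          rw [← decCtx_union]
          exact decCtx_none hx
  | tens_I hexp h12 h1d h2d hM₁ hM₂ ih₁ ih₂ =>
      intro Δ U hi hdom
      cases hi with
      | pair hi₁ hi₂ =>
          rw [decCtx_union, decCtx_union, dec_nbang]
          have hd1 := hdom_left hdom
          have hd2 := hdom_right hdom
          have h₁' := ih₁ hi₁ hd1
          have h₂' := ih₂ hi₂ hd2
          rw [decCtx_union, dec_nbang] at h₁' h₂'
          exact Types.tens_I (decCtx_isExp hexp) (decCtx_disj h12)
            (decCtx_disj h1d) (decCtx_disj h2d) h₁' h₂'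
  | top_ =>
      intro Δ U hi hdom
      cases hi
      rw [dec_nbang]
      exact Types.top_
  | tens_E hexp h12 h1d h2d hxne hx₁ hx₂ hM hN ihM ihN =>
      intro Δ U hi hdom
      cases hi with
      | letp hiM hiN =>
          rw [decCtx_union, decCtx_union]
          have hd1 := hdom_left hdom
          have hM' := ihM hiM hd1
          have hN' := ihN hiN (hdom_extend (hdom_extend (hdom_right hdom)))
          rw [decCtx_union, dec_nbang] at hM'
          rw [decCtx_extend, decCtx_extend, decCtx_union, dec_nbang, dec_nbang] at hN'
          refine Types.tens_E (decCtx_isExp hexp) (decCtx_disj h12)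
            (decCtx_disj h1d) (decCtx_disj h2d) hxne ?_ ?_ hM' hN'
          · rw [← decCtx_union]; exact decCtx_none hx₁
          · rw [← decCtx_union]; exact decCtx_none hx₂

-- STATEMENT 19
theorem decoration_lemma {Γ : Ctx} {Δ : ICtx} {M : Term} {A : QType} {U : IType}
    (hq : Types Γ M A) (hi : SimpTypes Δ M U)
    (hdom : ∀ x, (Δ x).isSome ↔ (Γ x).isSome) :
    Types (decCtx Δ Γ) M (dec U A) :=
  decoration_aux hq hi (fun x h => (hdom x).mpr h)
end
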